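/- (Lexell's theorem) Fix a geodesic segment AB on the unit sphere and a constant E ∈ (0, 2π). The locus of points C, on one side of the great circle through A and B, such that the spherical triangle ABC has area E, is an arc of a small circle passing through the antipodal points A* and B* of A and B. -/

import Mathlib

open scoped RealInnerProductSpace

/-- Interior angle of a spherical triangle at vertex `u`, between the sides
towards `v` and `w`. -/
noncomputable def sphAngle (u v w : EuclideanSpace ℝ (Fin 3)) : ℝ :=
  InnerProductGeometry.angle (v - ⟪u, v⟫ • u) (w - ⟪u, w⟫ • u)

/-!
Write `a = ⟪B, C⟫`, `b = ⟪A, C⟫`, `c = ⟪A, B⟫` and let `V > 0` be the volume spanned by `A, B, C`.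
The spherical law of cosines and its sine companion express the cosine and sine of each angle
through `a, b, c, V`; expanding the cosine and sine of their sum gives Euler's formula
`cos (E / 2) * V = sin (E / 2) * (1 + a + b + c)`. Since `V = √(1 - c²) * ⟪n, C⟫` is linear in `C`,
this is the plane equation `⟪v, C⟫ = sin (E / 2) * (1 + c)` with
`v = cos (E / 2) √(1 - c²) n - sin (E / 2) (A + B)`, which `-A` and `-B` satisfy.
-/

open InnerProductGeometry Module Real

/-- The squared volume of the parallelepiped spanned by three unit vectors with pairwise inner
products `x, y, z` (their Gram determinant). -/
def unitGram (x y z : ℝ) : ℝ := 1 - x ^ 2 - y ^ 2 - z ^ 2 + 2 * x * y * z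

lemma one_sub_sq_pos_of_unitGram_pos {x y z : ℝ} (hx : x ^ 2 ≤ 1) (hy : y ^ 2 ≤ 1)
    (hz : z ^ 2 ≤ 1) (hG : 0 < unitGram x y z) :
    0 < 1 - x ^ 2 ∧ 0 < 1 - y ^ 2 ∧ 0 < 1 - z ^ 2 := by
  unfold unitGram at hG
  refine ⟨?_, ?_, ?_⟩
  · nlinarith [sq_nonneg (z - x * y)]
  · nlinarith [sq_nonneg (z - x * y)]
  · nlinarith [sq_nonneg (y - x * z)]

lemma cos_half_mul_eq_sin_half_mul {E K V : ℝ} (hcos : cos E * (K ^ 2 + V ^ 2) = K ^ 2 - V ^ 2)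
    (hsin : sin E * (K ^ 2 + V ^ 2) = 2 * K * V) (hs : sin (E / 2) ≠ 0) :
    cos (E / 2) * V = sin (E / 2) * K := by
  have hE : E = 2 * (E / 2) := by ring
  rw [hE, cos_two_mul, cos_sq'] at hcos
  rw [hE, sin_two_mul] at hsin
  have h : (cos (E / 2) * V - sin (E / 2) * K) * (sin (E / 2) * (K ^ 2 + V ^ 2)) = 0 := by
    linear_combination K / 2 * hcos + V / 2 * hsin
  rcases mul_eq_zero.1 h with h | h
  · linarith
  · have hKV : K ^ 2 + V ^ 2 = 0 := (mul_eq_zero.1 h).resolve_left hs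
    have hV : V = 0 := by nlinarith [sq_nonneg K, sq_nonneg V]
    have hK : K = 0 := by nlinarith [sq_nonneg K, sq_nonneg V]
    simp [hV, hK]

lemma cos_sin_add_add_mul {α β γ p q r X Y Z V : ℝ}
    (hcα : cos α * (r * q) = X) (hsα : sin α * (r * q) = V)
    (hcβ : cos β * (r * p) = Y) (hsβ : sin β * (r * p) = V)
    (hcγ : cos γ * (q * p) = Z) (hsγ : sin γ * (q * p) = V) :
    cos (α + β + γ) * (p * q * r) ^ 2 = X * Y * Z - (X + Y + Z) * V ^ 2 ∧
      sin (α + β + γ) * (p * q * r) ^ 2 = (X * Y + Y * Z + Z * X - V ^ 2) * V := by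
  constructor
  · calc cos (α + β + γ) * (p * q * r) ^ 2
        = cos α * (r * q) * (cos β * (r * p)) * (cos γ * (q * p))
          - cos α * (r * q) * (sin β * (r * p)) * (sin γ * (q * p))
          - sin α * (r * q) * (cos β * (r * p)) * (sin γ * (q * p))
          - sin α * (r * q) * (sin β * (r * p)) * (cos γ * (q * p)) := by
          rw [cos_add, cos_add, sin_add]; ring
      _ = X * Y * Z - (X + Y + Z) * V ^ 2 := by rw [hcα, hcβ, hcγ, hsα, hsβ, hsγ]; ring
  · calc sin (α + β + γ) * (p * q * r) ^ 2
        = sin α * (r * q) * (cos β * (r * p)) * (cos γ * (q * p))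
          + cos α * (r * q) * (sin β * (r * p)) * (cos γ * (q * p))
          + cos α * (r * q) * (cos β * (r * p)) * (sin γ * (q * p))
          - sin α * (r * q) * (sin β * (r * p)) * (sin γ * (q * p)) := by
          rw [sin_add, sin_add, cos_add]; ring
      _ = (X * Y + Y * Z + Z * X - V ^ 2) * V := by rw [hcα, hcβ, hcγ, hsα, hsβ, hsγ]; ring

lemma cos_sin_add_add_sub_pi_mul {a b c p q r V α β γ : ℝ} (hp : p ≠ 0) (hq : q ≠ 0)
    (hr : r ≠ 0) (hp2 : p ^ 2 = 1 - a ^ 2) (hq2 : q ^ 2 = 1 - b ^ 2) (hr2 : r ^ 2 = 1 - c ^ 2)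
    (hV : V ^ 2 = unitGram c b a)
    (hcα : cos α * (r * q) = a - c * b) (hsα : sin α * (r * q) = V)
    (hcβ : cos β * (r * p) = b - c * a) (hsβ : sin β * (r * p) = V)
    (hcγ : cos γ * (q * p) = c - b * a) (hsγ : sin γ * (q * p) = V) :
    cos (α + β + γ - π) * ((1 + a + b + c) ^ 2 + V ^ 2) = (1 + a + b + c) ^ 2 - V ^ 2 ∧
      sin (α + β + γ - π) * ((1 + a + b + c) ^ 2 + V ^ 2) = 2 * (1 + a + b + c) * V := by
  obtain ⟨hcos, hsin⟩ := cos_sin_add_add_mul hcα hsα hcβ hsβ hcγ hsγ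
  set X := a - c * b
  set Y := b - c * a
  set Z := c - b * a
  set K := 1 + a + b + c
  set P := 2 * (1 + a) * (1 + b) * (1 + c)
  set Q := (1 - a ^ 2) * (1 - b ^ 2) * (1 - c ^ 2)
  have hpqr : (p * q * r) ^ 2 ≠ 0 := by positivity
  have hQ : (p * q * r) ^ 2 = Q := by
    linear_combination q ^ 2 * r ^ 2 * hp2 + (1 - a ^ 2) * r ^ 2 * hq2
      + (1 - a ^ 2) * (1 - b ^ 2) * hr2
  unfold unitGram at hV
  have hP : K ^ 2 + V ^ 2 = P := by linear_combination hV
  have hcosP : (X * Y * Z - (X + Y + Z) * V ^ 2) * P = (V ^ 2 - K ^ 2) * Q := by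
    linear_combination (-(X + Y + Z) * P - Q) * hV
  have hsinP : (X * Y + Y * Z + Z * X - V ^ 2) * V * P = -2 * K * V * Q := by
    linear_combination (-V * P) * hV
  rw [cos_sub_pi, sin_sub_pi]
  constructor
  · refine mul_right_cancel₀ hpqr ?_
    linear_combination -(K ^ 2 + V ^ 2) * hcos - (K ^ 2 - V ^ 2) * hQ
      - (X * Y * Z - (X + Y + Z) * V ^ 2) * hP - hcosP
  · refine mul_right_cancel₀ hpqr ?_
    linear_combination -(K ^ 2 + V ^ 2) * hsin - 2 * K * V * hQ
      - (X * Y + Y * Z + Z * X - V ^ 2) * V * hP - hsinP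

section InnerProductSpace

variable {F : Type*} [NormedAddCommGroup F] [InnerProductSpace ℝ F]

lemma inner_sub_inner_smul_sub_inner_smul {u : F} (hu : ‖u‖ = 1) (v w : F) :
    ⟪v - ⟪u, v⟫ • u, w - ⟪u, w⟫ • u⟫ = ⟪v, w⟫ - ⟪u, v⟫ * ⟪u, w⟫ := by
  have huu : ⟪u, u⟫ = 1 := by rw [real_inner_self_eq_norm_sq, hu, one_pow]
  simp only [inner_sub_left, inner_sub_right, real_inner_smul_left, real_inner_smul_right, huu,
    real_inner_comm u]
  ring

lemma norm_sub_inner_smul {u v : F} (hu : ‖u‖ = 1) (hv : ‖v‖ = 1) :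
    ‖v - ⟪u, v⟫ • u‖ = √(1 - ⟪u, v⟫ ^ 2) := by
  have hvv : ⟪v, v⟫ = 1 := by rw [real_inner_self_eq_norm_sq, hv, one_pow]
  rw [norm_eq_sqrt_real_inner, inner_sub_inner_smul_sub_inner_smul hu, hvv, sq]

lemma sq_inner_le_one {u v : F} (hu : ‖u‖ = 1) (hv : ‖v‖ = 1) : ⟪u, v⟫ ^ 2 ≤ 1 :=
  (sq_le_one_iff_abs_le_one _).2 (by simpa [hu, hv] using abs_real_inner_le_norm u v)

lemma sq_inner_lt_one_of_linearIndependent {A B : F} (hA : ‖A‖ = 1) (hB : ‖B‖ = 1)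
    (hAB : LinearIndependent ℝ ![A, B]) : ⟪A, B⟫ ^ 2 < 1 := by
  have hle : |⟪A, B⟫| ≤ 1 := by simpa [hA, hB] using abs_real_inner_le_norm A B
  refine (sq_lt_one_iff_abs_lt_one _).2 (hle.lt_of_ne fun h ↦ ?_)
  obtain ⟨-, r, -, rfl⟩ :=
    (abs_real_inner_div_norm_mul_norm_eq_one_iff A B).1 (by simp [hA, hB, h])
  have := LinearIndependent.pair_iff.1 hAB r (-1) (by simp)
  norm_num at this

theorem Orthonormal.sum_sq_inner_eq_norm_sq {ι : Type*} [Fintype ι] [Nonempty ι] {e : ι → F}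
    (he : Orthonormal ℝ e) (hcard : Fintype.card ι = finrank ℝ F) (x : F) :
    ∑ i, ⟪e i, x⟫ ^ 2 = ‖x‖ ^ 2 := by
  have hb := coe_basisOfOrthonormalOfCardEqFinrank he hcard
  have h := ((basisOfOrthonormalOfCardEqFinrank he hcard).toOrthonormalBasis
    (by rwa [hb])).sum_sq_inner_right x
  rwa [Module.Basis.coe_toOrthonormalBasis, hb] at h

theorem one_sub_sq_inner_mul_sq_inner_normal (hF : finrank ℝ F = 3) {A B C n : F}
    (hA : ‖A‖ = 1) (hB : ‖B‖ = 1) (hC : ‖C‖ = 1) (hn : ‖n‖ = 1)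
    (hnA : ⟪n, A⟫ = 0) (hnB : ⟪n, B⟫ = 0) (hAB : ⟪A, B⟫ ^ 2 < 1) :
    (1 - ⟪A, B⟫ ^ 2) * ⟪n, C⟫ ^ 2 = unitGram ⟪A, B⟫ ⟪A, C⟫ ⟪B, C⟫ := by
  set r := √(1 - ⟪A, B⟫ ^ 2)
  have hr : 0 < r := sqrt_pos.2 (by linarith)
  have hr2 : r ^ 2 = 1 - ⟪A, B⟫ ^ 2 := sq_sqrt (by linarith)
  have hB' : ‖r⁻¹ • (B - ⟪A, B⟫ • A)‖ = 1 := by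
    rw [norm_smul, norm_sub_inner_smul hA hB, norm_inv, norm_of_nonneg hr.le,
      inv_mul_cancel₀ hr.ne']
  have hon : Orthonormal ℝ ![A, r⁻¹ • (B - ⟪A, B⟫ • A), n] := by
    simp [Fin.forall_fin_succ, hA, hB', hn, real_inner_smul_right, inner_sub_right,
      real_inner_comm n, hnA, hnB]
  have hpar := hon.sum_sq_inner_eq_norm_sq (by simp [hF]) C
  simp only [Fin.sum_univ_three, Matrix.cons_val_zero, Matrix.cons_val_one, Matrix.cons_val_two,
    Matrix.head_cons, Matrix.tail_cons, hC, real_inner_smul_left, inner_sub_left] at hpar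
  field_simp at hpar
  unfold unitGram
  linear_combination hpar - (⟪A, C⟫ ^ 2 + ⟪n, C⟫ ^ 2 - 1) * hr2

end InnerProductSpace

section Sphere

variable {u v w : EuclideanSpace ℝ (Fin 3)}

lemma cos_sphAngle_mul (hu : ‖u‖ = 1) (hv : ‖v‖ = 1) (hw : ‖w‖ = 1) :
    cos (sphAngle u v w) * (√(1 - ⟪u, v⟫ ^ 2) * √(1 - ⟪u, w⟫ ^ 2)) =
      ⟪v, w⟫ - ⟪u, v⟫ * ⟪u, w⟫ := by
  rw [sphAngle, ← norm_sub_inner_smul hu hv, ← norm_sub_inner_smul hu hw,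
    cos_angle_mul_norm_mul_norm, inner_sub_inner_smul_sub_inner_smul hu]

lemma sin_sphAngle_mul (hu : ‖u‖ = 1) (hv : ‖v‖ = 1) (hw : ‖w‖ = 1) :
    sin (sphAngle u v w) * (√(1 - ⟪u, v⟫ ^ 2) * √(1 - ⟪u, w⟫ ^ 2)) =
      √(unitGram ⟪u, v⟫ ⟪u, w⟫ ⟪v, w⟫) := by
  have hvv : ⟪v, v⟫ = 1 := by rw [real_inner_self_eq_norm_sq, hv, one_pow]
  have hww : ⟪w, w⟫ = 1 := by rw [real_inner_self_eq_norm_sq, hw, one_pow]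
  rw [sphAngle, ← norm_sub_inner_smul hu hv, ← norm_sub_inner_smul hu hw,
    sin_angle_mul_norm_mul_norm]
  simp only [inner_sub_inner_smul_sub_inner_smul hu, hvv, hww]
  congr 1
  unfold unitGram
  ring

end Sphere

noncomputable def sphExcess (A B C : EuclideanSpace ℝ (Fin 3)) : ℝ :=
  sphAngle A B C + sphAngle B A C + sphAngle C A B - π

/-- Euler's formula `tan (E / 2) = V / (1 + ⟪A, B⟫ + ⟪A, C⟫ + ⟪B, C⟫)` for the spherical excess,
`V` being the volume spanned by `A, B, C`. -/
theorem cos_half_sphExcess_mul {A B C : EuclideanSpace ℝ (Fin 3)}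
    (hA : ‖A‖ = 1) (hB : ‖B‖ = 1) (hC : ‖C‖ = 1) (hG : 0 < unitGram ⟪A, B⟫ ⟪A, C⟫ ⟪B, C⟫)
    (hs : sin (sphExcess A B C / 2) ≠ 0) :
    cos (sphExcess A B C / 2) * √(unitGram ⟪A, B⟫ ⟪A, C⟫ ⟪B, C⟫) =
      sin (sphExcess A B C / 2) * (1 + ⟪A, B⟫ + ⟪A, C⟫ + ⟪B, C⟫) := by
  obtain ⟨hc, hb, ha⟩ := one_sub_sq_pos_of_unitGram_pos (sq_inner_le_one hA hB)
    (sq_inner_le_one hA hC) (sq_inner_le_one hB hC) hG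
  have hGB : unitGram ⟪A, B⟫ ⟪B, C⟫ ⟪A, C⟫ = unitGram ⟪A, B⟫ ⟪A, C⟫ ⟪B, C⟫ := by
    unfold unitGram; ring
  have hGC : unitGram ⟪A, C⟫ ⟪B, C⟫ ⟪A, B⟫ = unitGram ⟪A, B⟫ ⟪A, C⟫ ⟪B, C⟫ := by
    unfold unitGram; ring
  have hcβ := cos_sphAngle_mul hB hA hC
  have hsβ := sin_sphAngle_mul hB hA hC
  have hcγ := cos_sphAngle_mul hC hA hB
  have hsγ := sin_sphAngle_mul hC hA hB
  simp only [real_inner_comm A B, real_inner_comm A C, real_inner_comm B C, hGB, hGC]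
    at hcβ hsβ hcγ hsγ
  obtain ⟨hcos, hsin⟩ := cos_sin_add_add_sub_pi_mul (sqrt_pos.2 ha).ne' (sqrt_pos.2 hb).ne'
    (sqrt_pos.2 hc).ne' (sq_sqrt ha.le) (sq_sqrt hb.le) (sq_sqrt hc.le) (sq_sqrt hG.le)
    (cos_sphAngle_mul hA hB hC) (sin_sphAngle_mul hA hB hC) hcβ hsβ hcγ hsγ
  unfold sphExcess at hs ⊢
  linear_combination cos_half_mul_eq_sin_half_mul hcos hsin hs

theorem lexell (A B n : EuclideanSpace ℝ (Fin 3))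
    (hA : ‖A‖ = 1) (hB : ‖B‖ = 1) (hn : ‖n‖ = 1)
    (hAB : LinearIndependent ℝ ![A, B])
    (hnA : ⟪n, A⟫ = 0) (hnB : ⟪n, B⟫ = 0)
    (E : ℝ) (hE : E ∈ Set.Ioo 0 (2 * Real.pi)) :
    ∃ (v : EuclideanSpace ℝ (Fin 3)) (d : ℝ), v ≠ 0 ∧
      ⟪v, -A⟫ = d ∧ ⟪v, -B⟫ = d ∧
      ∀ C : EuclideanSpace ℝ (Fin 3), ‖C‖ = 1 → 0 < ⟪n, C⟫ →
        sphAngle A B C + sphAngle B A C + sphAngle C A B - Real.pi = E →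
        ⟪v, C⟫ = d := by
  have hc := sq_inner_lt_one_of_linearIndependent hA hB hAB
  have hs : 0 < sin (E / 2) := sin_pos_of_pos_of_lt_pi (by linarith [hE.1]) (by linarith [hE.2])
  have hd : 0 < sin (E / 2) * (1 + ⟪A, B⟫) := mul_pos hs (by nlinarith)
  have hAA : ⟪A, A⟫ = 1 := by rw [real_inner_self_eq_norm_sq, hA, one_pow]
  have hBB : ⟪B, B⟫ = 1 := by rw [real_inner_self_eq_norm_sq, hB, one_pow]
  set v := (cos (E / 2) * √(1 - ⟪A, B⟫ ^ 2)) • n - sin (E / 2) • (A + B)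
  have hvA : ⟪v, -A⟫ = sin (E / 2) * (1 + ⟪A, B⟫) := by
    simp only [v, inner_neg_right, inner_sub_left, inner_add_left, real_inner_smul_left, hnA, hAA,
      real_inner_comm A B]
    ring
  have hvB : ⟪v, -B⟫ = sin (E / 2) * (1 + ⟪A, B⟫) := by
    simp only [v, inner_neg_right, inner_sub_left, inner_add_left, real_inner_smul_left, hnB, hBB]
    ring
  refine ⟨v, _, fun hv ↦ ?_, hvA, hvB, fun C hC hnC hExc ↦ ?_⟩
  · rw [hv, inner_zero_left] at hvA
    linarith
  have hG : unitGram ⟪A, B⟫ ⟪A, C⟫ ⟪B, C⟫ = (√(1 - ⟪A, B⟫ ^ 2) * ⟪n, C⟫) ^ 2 := by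
    rw [mul_pow, sq_sqrt (by linarith), one_sub_sq_inner_mul_sq_inner_normal
      finrank_euclideanSpace_fin hA hB hC hn hnA hnB hc]
  have hExc : sphExcess A B C = E := hExc
  have key := cos_half_sphExcess_mul hA hB hC (by rw [hG]; positivity) (by rw [hExc]; exact hs.ne')
  rw [hExc, hG, sqrt_sq (by positivity)] at key
  simp only [v, inner_sub_left, real_inner_smul_left, inner_add_left]
  linear_combination key
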